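/- Let n ≥ 4 be an even integer and let R_(n,2) be the (n,2)-regular graph of order n, i.e., the complete graph K_n with a perfect matching removed. Then rvcl(R_(n,2)) ≥ n/2 + 1; equivalently, R_(n,2) admits no locating rainbow k-coloring with k ≤ n/2. -/

import Mathlib

namespace LocatingRainbow

open SimpleGraph

variable {V : Type*}

/-- The internal vertices of a walk: its support without the endpoints. -/
def internalVertices {G : SimpleGraph V} {u v : V} (p : G.Walk u v) : List V :=
  p.support.tail.dropLast

/-- `c` is a rainbow vertex coloring of `G` (with colors in `Fin k`) if any two distinct
vertices are joined by a path whose internal vertices have pairwise distinct colors. -/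
def IsRainbowVertexColoring (G : SimpleGraph V) {k : ℕ} (c : V → Fin k) : Prop :=
  ∀ u v : V, u ≠ v → ∃ p : G.Walk u v, p.IsPath ∧ ((internalVertices p).map c).Nodup

/-- The distance from a vertex `v` to the color class of the color `i`. -/
noncomputable def distToColor (G : SimpleGraph V) {k : ℕ} (c : V → Fin k) (v : V) (i : Fin k) :
    ℕ :=
  sInf {m | ∃ y, c y = i ∧ G.dist v y = m}

/-- The rainbow code of a vertex `v`: the vector of distances to all color classes. -/
noncomputable def rainbowCode (G : SimpleGraph V) {k : ℕ} (c : V → Fin k) (v : V) :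
    Fin k → ℕ :=
  fun i => distToColor G c v i

/-- `c` is a locating rainbow coloring if it is a rainbow vertex coloring and distinct
vertices have distinct rainbow codes. -/
def IsLocatingRainbowColoring (G : SimpleGraph V) {k : ℕ} (c : V → Fin k) : Prop :=
  IsRainbowVertexColoring G c ∧ Function.Injective (rainbowCode G c)

/-- The rainbow vertex connection number of `G`. -/
noncomputable def rvc (G : SimpleGraph V) : ℕ :=
  sInf {k | ∃ c : V → Fin k, IsRainbowVertexColoring G c}

/-- The locating rainbow connection number of `G`. -/
noncomputable def rvcl (G : SimpleGraph V) : ℕ :=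
  sInf {k | ∃ c : V → Fin k, IsLocatingRainbowColoring G c}

end LocatingRainbow

namespace LocatingRainbow

open SimpleGraph

/-- The `(n,2)`-regular graph (for even `n`): the complete graph on `Fin n` with the
perfect matching `{vᵢ v_{i+n/2}}` (indices mod `n`) removed; every vertex has degree
`n - 2`. -/
def Rn2 (n : ℕ) : SimpleGraph (Fin n) where
  Adj i j := i ≠ j ∧ (i.val + n / 2) % n ≠ j.val ∧ (j.val + n / 2) % n ≠ i.val
  symm := ⟨fun _ _ ⟨h1, h2, h3⟩ => ⟨h1.symm, h3, h2⟩⟩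
  loopless := ⟨fun _ h => h.1 rfl⟩

/-- The `(n,3)`-regular graph: the complement of the cycle `C_n`, i.e. the complete graph
with the edges of a Hamiltonian cycle removed; every vertex has degree `n - 3`. -/
def Rn3 (n : ℕ) : SimpleGraph (Fin n) := (cycleGraph n)ᶜ

/-- The `(n,t)`-regular graph for `t ∈ {2, 3}`. -/
def Rnt (n t : ℕ) : SimpleGraph (Fin n) := if t = 2 then Rn2 n else Rn3 n

end LocatingRainbow

/-!
In `R_(n,2)` every vertex is at distance `1` from all other vertices except its antipode, so the
rainbow code of `v` records only the color of `v`, plus the color of its antipode when the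
antipode is alone in its color class. Call `v` *marked* in that case. Two unmarked vertices of
the same color thus share their code, so a locating coloring is injective on unmarked vertices,
and there are at most `k` of them. With `k ≤ n/2 < n` colors some color class is not a
singleton, so fewer than `k` vertices are alone in their class, hence fewer than `k` vertices
are marked. Altogether `n < 2k ≤ n`.
-/

namespace LocatingRainbow

open SimpleGraph Finset

section General

variable {V : Type*} {G : SimpleGraph V} {k : ℕ} {c : V → Fin k} {v : V} {i : Fin k}

lemma distToColor_self : distToColor G c v (c v) = 0 :=
  Nat.sInf_eq_zero.mpr (Or.inl ⟨v, rfl, dist_self⟩)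

lemma distToColor_of_forall_ne (h : ∀ y, c y ≠ i) : distToColor G c v i = 0 :=
  Nat.sInf_eq_zero.mpr (Or.inr (Set.eq_empty_iff_forall_notMem.mpr fun _ ⟨y, hy, _⟩ => h y hy))

lemma exists_dist_eq_distToColor (h : ∃ y, c y = i) :
    ∃ y, c y = i ∧ G.dist v y = distToColor G c v i := by
  obtain ⟨y, hy⟩ := h
  exact Nat.sInf_mem (s := {m | ∃ y, c y = i ∧ G.dist v y = m}) ⟨_, y, hy, rfl⟩

lemma color_eq_of_distToColor_eq_zero (hG : G.Connected) (h : ∃ y, c y = i)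
    (h0 : distToColor G c v i = 0) : c v = i := by
  obtain ⟨y, hy, hd⟩ := exists_dist_eq_distToColor (G := G) (v := v) h
  rw [h0, hG.dist_eq_zero_iff] at hd
  rwa [hd]

lemma distToColor_eq_one_of_adj (hG : G.Connected) (hv : c v ≠ i)
    (hadj : ∃ y, c y = i ∧ G.Adj v y) : distToColor G c v i = 1 := by
  obtain ⟨y, hy, hvy⟩ := hadj
  refine le_antisymm (Nat.sInf_le ⟨y, hy, dist_eq_one_iff_adj.mpr hvy⟩) ?_
  obtain ⟨z, hz, hd⟩ := exists_dist_eq_distToColor (G := G) (v := v) ⟨y, hy⟩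
  exact hd ▸ hG.pos_dist_of_ne fun hvz => hv (hvz ▸ hz)

lemma isRainbowVertexColoring_of_injective (hG : G.Connected)
    (hc : Function.Injective c) : IsRainbowVertexColoring G c := fun u v _ =>
  let ⟨p, hp⟩ := (hG u v).exists_isPath
  ⟨p, hp, (hp.support_nodup.sublist
    ((List.dropLast_sublist _).trans (List.tail_sublist _))).map hc⟩

lemma isLocatingRainbowColoring_of_injective (hG : G.Connected)
    (hc : Function.Injective c) : IsLocatingRainbowColoring G c := by
  refine ⟨isRainbowVertexColoring_of_injective hG hc, fun u v huv => hc ?_⟩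
  have h0 : distToColor G c v (c u) = 0 := (congrFun huv (c u)).symm.trans distToColor_self
  exact (color_eq_of_distToColor_eq_zero hG ⟨u, rfl⟩ h0).symm

end General

def UniquelyColored {V α : Type*} (c : V → α) (v : V) : Prop :=
  ∀ w, c w = c v → w = v

open scoped Classical in
lemma card_uniquelyColored_lt {V α : Type*} [Fintype V] [Fintype α] {c : V → α}
    (hc : ¬ Function.Injective c) : #{v | UniquelyColored c v} < Fintype.card α := by
  obtain ⟨a, b, hab, hne⟩ := Function.not_injective_iff.mp hc
  have hinj : Set.InjOn c ({v | UniquelyColored c v} : Finset V) := fun u hu _ _ huv =>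
    ((mem_filter.mp (mem_coe.mp hu)).2 _ huv.symm).symm
  have hmiss : c a ∉ image c {v | UniquelyColored c v} := by
    simp only [mem_image, mem_filter, mem_univ, true_and, not_exists, not_and]
    intro v hv hva
    exact hne ((hv a hva.symm).trans (hv b (hab.symm.trans hva.symm)).symm)
  simpa [card_image_of_injOn hinj] using card_lt_univ_of_notMem hmiss

section Rn2

variable {n : ℕ}

def antipode (v : Fin n) : Fin n := ⟨(v.val + n / 2) % n, Nat.mod_lt _ v.pos⟩

lemma antipode_involutive (hpar : Even n) : Function.Involutive (antipode (n := n)) := by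
  obtain ⟨m, rfl⟩ := hpar
  intro v
  have hm : (m + m) / 2 = m := by omega
  ext
  simp only [antipode, hm, Nat.mod_add_mod, add_assoc, Nat.add_mod_right,
    Nat.mod_eq_of_lt v.isLt]

lemma Rn2_adj_iff (hpar : Even n) {u v : Fin n} :
    (Rn2 n).Adj u v ↔ u ≠ v ∧ v ≠ antipode u := by
  have hv : (v.val + n / 2) % n ≠ u.val ↔ v ≠ antipode u :=
    (Fin.ext_iff (a := antipode v)).not.symm.trans (antipode_involutive hpar).eq_iff.not
  have hu : (u.val + n / 2) % n ≠ v.val ↔ v ≠ antipode u :=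
    (Fin.ext_iff (a := antipode u)).not.symm.trans ne_comm
  change u ≠ v ∧ _ ∧ _ ↔ _
  rw [hu, hv, and_self]

lemma exists_ne_ne_antipode (hn : 3 ≤ n) (u : Fin n) : ∃ w, w ≠ u ∧ w ≠ antipode u := by
  have hcard : #{u, antipode u} < #(univ : Finset (Fin n)) := by
    simpa using (card_le_two (a := u) (b := antipode u)).trans_lt (by omega)
  obtain ⟨w, -, hw⟩ := exists_mem_notMem_of_card_lt_card hcard
  simp only [mem_insert, mem_singleton, not_or] at hw
  exact ⟨w, hw⟩

lemma Rn2_connected (hn : 3 ≤ n) (hpar : Even n) : (Rn2 n).Connected := by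
  have : Nonempty (Fin n) := ⟨⟨0, by omega⟩⟩
  refine Connected.mk fun u v => ?_
  by_cases huv : u = v
  · exact huv ▸ Reachable.refl u
  by_cases hv : v = antipode u
  · subst hv
    obtain ⟨w, hwu, hwa⟩ := exists_ne_ne_antipode hn u
    have huw : (Rn2 n).Adj u w := (Rn2_adj_iff hpar).mpr ⟨hwu.symm, hwa⟩
    have hwa' : (Rn2 n).Adj w (antipode u) :=
      (Rn2_adj_iff hpar).mpr ⟨hwa, (antipode_involutive hpar).injective.ne hwu.symm⟩
    exact huw.reachable.trans hwa'.reachable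
  · exact ((Rn2_adj_iff hpar).mpr ⟨huv, hv⟩).reachable

variable {k : ℕ} {c : Fin n → Fin k}

lemma distToColor_Rn2 (hn : 3 ≤ n) (hpar : Even n) {u : Fin n}
    (hu : ¬ UniquelyColored c (antipode u)) (i : Fin k) :
    distToColor (Rn2 n) c u i = if c u = i then 0 else if ∃ y, c y = i then 1 else 0 := by
  split_ifs with hui hi
  · exact hui ▸ distToColor_self
  · refine distToColor_eq_one_of_adj (Rn2_connected hn hpar) hui ?_
    obtain ⟨y, hy⟩ := hi
    have hne : ∀ {z}, c z = i → u ≠ z := fun hz h => hui (h ▸ hz)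
    by_cases hya : y = antipode u
    · obtain ⟨w, hw, hwa⟩ : ∃ w, c w = c (antipode u) ∧ w ≠ antipode u := by
        simpa [UniquelyColored] using hu
      have hwi : c w = i := hw.trans (hya ▸ hy)
      exact ⟨w, hwi, (Rn2_adj_iff hpar).mpr ⟨hne hwi, hwa⟩⟩
    · exact ⟨y, hy, (Rn2_adj_iff hpar).mpr ⟨hne hy, hya⟩⟩
  · exact distToColor_of_forall_ne (not_exists.mp hi)

lemma rainbowCode_Rn2_eq_of_color_eq (hn : 3 ≤ n) (hpar : Even n) {u v : Fin n}
    (hu : ¬ UniquelyColored c (antipode u)) (hv : ¬ UniquelyColored c (antipode v))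
    (huv : c u = c v) : rainbowCode (Rn2 n) c u = rainbowCode (Rn2 n) c v := by
  funext i
  simp only [rainbowCode, distToColor_Rn2 hn hpar hu, distToColor_Rn2 hn hpar hv, huv]

theorem not_isLocatingRainbowColoring_Rn2 (hn : 3 ≤ n) (hpar : Even n) (hk : k ≤ n / 2)
    (c : Fin n → Fin k) : ¬ IsLocatingRainbowColoring (Rn2 n) c := by
  classical
  rintro ⟨-, hcode⟩
  by_cases hc : Function.Injective c
  · have := Fintype.card_le_of_injective c hc
    simp only [Fintype.card_fin] at this
    omega
  have hmarked : #{v | UniquelyColored c (antipode v)} < k := by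
    refine (card_le_card_of_injOn antipode (fun v hv => ?_)
      ((antipode_involutive hpar).injective.injOn)).trans_lt
      ((card_uniquelyColored_lt hc).trans_eq (Fintype.card_fin k))
    simpa using hv
  have hunmarked : #{v | ¬ UniquelyColored c (antipode v)} ≤ k := by
    simpa using card_le_card_of_injOn c (t := univ) (fun _ _ => mem_univ _)
      fun u hu v hv huv => hcode <| rainbowCode_Rn2_eq_of_color_eq hn hpar
        (mem_filter.mp hu).2 (mem_filter.mp hv).2 huv
  have htotal := card_filter_add_card_filter_not (s := (univ : Finset (Fin n)))
    (fun v => UniquelyColored c (antipode v))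
  simp only [card_univ, Fintype.card_fin] at htotal
  omega

end Rn2

end LocatingRainbow

open LocatingRainbow in
/-- For even `n ≥ 4`, the `(n,2)`-regular graph satisfies `rvcl(R_(n,2)) ≥ n/2 + 1`;
equivalently, it admits no locating rainbow `k`-coloring with `k ≤ n/2`. -/
theorem rvcl_Rn2_lower {n : ℕ} (hn : 4 ≤ n) (hpar : Even n) :
    n / 2 + 1 ≤ rvcl (Rn2 n) ∧
      ∀ k ≤ n / 2, ∀ c : Fin n → Fin k, ¬ IsLocatingRainbowColoring (Rn2 n) c := by
  have hn3 : 3 ≤ n := by omega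
  have hnone : ∀ k ≤ n / 2, ∀ c : Fin n → Fin k, ¬ IsLocatingRainbowColoring (Rn2 n) c :=
    fun k hk => not_isLocatingRainbowColoring_Rn2 hn3 hpar hk
  have hid : IsLocatingRainbowColoring (Rn2 n) (id : Fin n → Fin n) :=
    isLocatingRainbowColoring_of_injective (Rn2_connected hn3 hpar) Function.injective_id
  refine ⟨le_csInf ⟨n, id, hid⟩ fun k ⟨c, hc⟩ => ?_, hnone⟩
  by_contra hk
  exact hnone k (by omega) c hc
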